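/- arXiv:math/0404363 — 3 statements merged into one kernel-verified Lean document; each statement's English description precedes it below -/
import Mathlib

section
/- Let x, y be real numbers with 0 < x < 1 and 0 < y < 1, and set α = exp(2πi·x), β = exp(2πi·y). Then the complex number z = i·(1/(1−α) − 1 + 1/(1−β)) is real, and: z < 0 if and only if x + y < 1; z = 0 if and only if x + y = 1; and z > 0 if and only if x + y > 1. -/
open Complex

lemma aux_mul (s c : ℝ) (hs : s ≠ 0) (h : s ^ 2 + c ^ 2 = 1) :
    (1 / 2 + ((c / (2 * s) : ℝ) : ℂ) * Complex.I)
      * (1 - (((2 * c ^ 2 - 1 : ℝ) : ℂ) + ((2 * s * c : ℝ) : ℂ) * Complex.I)) = 1 := by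
  have hsC : (s : ℂ) ≠ 0 := by exact_mod_cast hs
  have hC : (s : ℂ) ^ 2 + (c : ℂ) ^ 2 = 1 := by exact_mod_cast h
  push_cast
  field_simp
  linear_combination (-2*(s:ℂ)*(c:ℂ)^2) * Complex.I_sq + (-2*(c:ℂ)*Complex.I) * hC

lemma one_div_one_sub_exp (t : ℝ) (ht0 : 0 < t) (ht1 : t < 1) :
    1 / (1 - Complex.exp (2 * Real.pi * Complex.I * t)) =
      1 / 2 + ((Real.cos (Real.pi * t) / (2 * Real.sin (Real.pi * t)) : ℝ) : ℂ) * Complex.I := by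
  have hpi := Real.pi_pos
  have hs : 0 < Real.sin (Real.pi * t) :=
    Real.sin_pos_of_pos_of_lt_pi (by positivity) (by nlinarith)
  have hexp : Complex.exp (2 * Real.pi * Complex.I * t)
      = ((2 * Real.cos (Real.pi * t) ^ 2 - 1 : ℝ) : ℂ)
        + ((2 * Real.sin (Real.pi * t) * Real.cos (Real.pi * t) : ℝ) : ℂ) * Complex.I := by
    have h1 : (2 * Real.pi * Complex.I * t : ℂ) = ((2 * (Real.pi * t) : ℝ) : ℂ) * Complex.I := by
      push_cast; ring
    rw [h1, Complex.exp_mul_I, ← Complex.ofReal_cos, ← Complex.ofReal_sin,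
      Real.cos_two_mul, Real.sin_two_mul]
  have hmul := aux_mul (Real.sin (Real.pi * t)) (Real.cos (Real.pi * t)) (ne_of_gt hs)
    (Real.sin_sq_add_cos_sq _)
  rw [← hexp] at hmul
  exact (eq_one_div_of_mul_eq_one_left hmul).symm

/-- The Ψ-self-intersection number `z = i·(1/(1−α) − 1 + 1/(1−β))`, where
`α = exp(2πi x)` and `β = exp(2πi y)` with `0 < x,y < 1`, is a real number which is
negative iff `x + y < 1`, zero iff `x + y = 1`, and positive iff `x + y > 1`. -/
theorem selfIntersection_sign (x y : ℝ) (hx0 : 0 < x) (hx1 : x < 1) (hy0 : 0 < y) (hy1 : y < 1)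
    (α β : ℂ) (hα : α = Complex.exp (2 * Real.pi * Complex.I * x))
    (hβ : β = Complex.exp (2 * Real.pi * Complex.I * y))
    (z : ℂ) (hz : z = Complex.I * (1 / (1 - α) - 1 + 1 / (1 - β))) :
    z.im = 0 ∧ (z.re < 0 ↔ x + y < 1) ∧ (z = 0 ↔ x + y = 1) ∧ (0 < z.re ↔ 1 < x + y) := by
  have hpi := Real.pi_pos
  set s1 := Real.sin (Real.pi * x) with hs1def
  set c1 := Real.cos (Real.pi * x) with hc1def
  set s2 := Real.sin (Real.pi * y) with hs2def
  set c2 := Real.cos (Real.pi * y) with hc2def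
  have hs1 : 0 < s1 := Real.sin_pos_of_pos_of_lt_pi (by positivity) (by nlinarith)
  have hs2 : 0 < s2 := Real.sin_pos_of_pos_of_lt_pi (by positivity) (by nlinarith)
  set w : ℝ := -(c1 / (2 * s1) + c2 / (2 * s2)) with hwdef
  have hzw : z = (w : ℂ) := by
    rw [hz, hα, hβ, one_div_one_sub_exp x hx0 hx1, one_div_one_sub_exp y hy0 hy1]
    push_cast [hwdef, -Complex.ofReal_cos, -Complex.ofReal_sin]
    linear_combination ((c1 : ℂ) / (2 * (s1 : ℂ)) + (c2 : ℂ) / (2 * (s2 : ℂ))) * Complex.I_sq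
  -- w = - sin(π(x+y)) / (2 s1 s2)
  have hsadd : Real.sin (Real.pi * (x + y)) = s1 * c2 + c1 * s2 := by
    rw [mul_add, Real.sin_add]
  have hw : w = -(Real.sin (Real.pi * (x + y))) / (2 * s1 * s2) := by
    rw [hsadd, hwdef]; field_simp; ring
  have hden : 0 < 2 * s1 * s2 := by positivity
  have hsign : (w < 0 ↔ 0 < Real.sin (Real.pi * (x + y)))
      ∧ (w = 0 ↔ Real.sin (Real.pi * (x + y)) = 0)
      ∧ (0 < w ↔ Real.sin (Real.pi * (x + y)) < 0) := by
    rw [hw]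
    constructor
    · rw [div_neg_iff]
      constructor
      · rintro (⟨h1, h2⟩ | ⟨h1, h2⟩)
        · linarith
        · linarith
      · intro h; right; constructor <;> linarith
    constructor
    · rw [div_eq_zero_iff]
      constructor
      · rintro (h | h)
        · linarith
        · linarith
      · intro h; left; linarith
    · rw [div_pos_iff]
      constructor
      · rintro (⟨h1, h2⟩ | ⟨h1, h2⟩)
        · linarith
        · linarith
      · intro h; left; constructor <;> linarith
  -- sign of sin(π(x+y)) vs position of x+y relative to 1
  have htri : (0 < Real.sin (Real.pi * (x + y)) ↔ x + y < 1)
      ∧ (Real.sin (Real.pi * (x + y)) = 0 ↔ x + y = 1)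
      ∧ (Real.sin (Real.pi * (x + y)) < 0 ↔ 1 < x + y) := by
    rcases lt_trichotomy (x + y) 1 with h | h | h
    · have hpos : 0 < Real.sin (Real.pi * (x + y)) :=
        Real.sin_pos_of_pos_of_lt_pi (by positivity) (by nlinarith)
      refine ⟨⟨fun _ => h, fun _ => hpos⟩, ⟨fun h' => absurd h' (ne_of_gt hpos), fun h' => by linarith⟩,
        ⟨fun h' => by linarith, fun h' => by linarith⟩⟩
    · have hzero : Real.sin (Real.pi * (x + y)) = 0 := by
        rw [h, mul_one, Real.sin_pi]
      refine ⟨⟨fun h' => by linarith, fun h' => by linarith⟩, ⟨fun _ => h, fun _ => hzero⟩,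
        ⟨fun h' => by linarith, fun h' => by linarith⟩⟩
    · have hneg : Real.sin (Real.pi * (x + y)) < 0 := by
        have : Real.sin (Real.pi * (x + y) - Real.pi) = -Real.sin (Real.pi * (x + y)) :=
          Real.sin_sub_pi _
        have hpos2 : 0 < Real.sin (Real.pi * (x + y) - Real.pi) :=
          Real.sin_pos_of_pos_of_lt_pi (by nlinarith) (by nlinarith)
        linarith
      refine ⟨⟨fun h' => by linarith, fun h' => by linarith⟩,
        ⟨fun h' => absurd h' (ne_of_lt hneg), fun h' => by linarith⟩, ⟨fun _ => h, fun _ => hneg⟩⟩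
  obtain ⟨h1, h2, h3⟩ := hsign
  obtain ⟨t1, t2, t3⟩ := htri
  have hre : z.re = w := by rw [hzw]; simp
  have him : z.im = 0 := by rw [hzw]; simp
  refine ⟨him, ?_, ?_, ?_⟩
  · rw [hre, h1, t1]
  · rw [hzw]
    constructor
    · intro h'
      have : w = 0 := by exact_mod_cast h'
      exact t2.1 (h2.1 this)
    · intro h'
      have : w = 0 := h2.2 (t2.2 h')
      rw [this]; norm_num
  · rw [hre, h3, t3]
end

section
/- Suppose μ_i + μ_{i+1} is a rational number which is not an integer, and write μ_i + μ_{i+1} = p/k in lowest terms (k ≥ 2, gcd(p,k) = 1). Then the braid matrix R = R_{i,i+1} has finite order exactly k in GL_{n−2}(ℂ): R^k = Id, and R^m ≠ Id for every integer m with 1 ≤ m < k. -/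
open Matrix Complex

/-- The braid "transposition" `R_{i,i+1}` acting on intersection homology `ℂ^{n−2}` in the
standard basis `I_{1,2}, …, I_{n−2,n−1}`.  Here `i` is the 1-based index, `1 ≤ i ≤ n − 2`;
a 0-based row index `a : Fin (n-2)` corresponds to the 1-based index `a.val + 1`. -/
noncomputable def DMrefl (n : ℕ) (μ : ℕ → ℝ) (i : ℕ) : Matrix (Fin (n - 2)) (Fin (n - 2)) ℂ :=
  fun a b =>
    let α : ℕ → ℂ := fun m => Complex.exp (2 * Real.pi * Complex.I * (μ m))
    if a.val + 1 = i then
      (if b.val + 1 = i then α i * α (i + 1)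
       else if b.val + 2 = i then 1 - α (i + 1)
       else if b.val = i then α (i + 1) * (1 - α i)
       else 0)
    else if a = b then 1 else 0

/-! `R = DMrefl n μ i` differs from the identity only in row `i`, so `E = R - 1` has a single
nonzero row and satisfies `E² = (β - 1) E`, where `β = α_i α_{i+1}` is its diagonal entry in that
row. Hence `R^m = 1 + (1 + β + ⋯ + β^{m-1}) E`, which is the identity exactly when `β^m = 1`; so `R`
has the same order as `β = exp (2πi p/k)`, a primitive `k`-th root of unity. -/

open Finset Real

section PseudoReflection

variable {K A : Type*} [Ring A] {E : A} {β : K}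

theorem one_add_pow_of_mul_self_eq_smul [CommRing K] [Algebra K A] (hE : E * E = (β - 1) • E)
    (m : ℕ) :
    (1 + E) ^ m = 1 + (∑ j ∈ range m, β ^ j) • E := by
  induction m with
  | zero => simp
  | succ m ih =>
    rw [pow_succ, ih, geom_sum_succ, mul_add, mul_one, add_mul, one_mul, smul_mul_assoc, hE,
      smul_smul]
    linear_combination (norm := module)

variable [Field K] [Algebra K A]

theorem one_add_pow_eq_one_iff (hE : E * E = (β - 1) • E) (hE0 : E ≠ 0) (hβ : β ≠ 1) (m : ℕ) :
    (1 + E) ^ m = 1 ↔ β ^ m = 1 := by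
  rw [one_add_pow_of_mul_self_eq_smul hE, add_eq_left, smul_eq_zero, or_iff_left hE0,
    ← sub_eq_zero (a := β ^ m), ← geom_sum_mul, mul_eq_zero, or_iff_left (sub_ne_zero.2 hβ)]

theorem orderOf_one_add_eq_orderOf (hE : E * E = (β - 1) • E) (hE0 : E ≠ 0) (hβ : β ≠ 1) :
    orderOf (1 + E) = orderOf β :=
  orderOf_eq_orderOf_iff.2 (one_add_pow_eq_one_iff hE hE0 hβ)

end PseudoReflection

theorem Matrix.mul_self_eq_smul_of_eq_zero_off_row {ι α : Type*} [Fintype ι] [Semiring α]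
    {E : Matrix ι ι α} (r : ι) (hE : ∀ a ≠ r, ∀ b, E a b = 0) : E * E = E r r • E := by
  ext a b
  by_cases ha : a = r
  · subst ha
    rw [mul_apply, sum_eq_single a (fun c _ hc => by rw [hE c hc, mul_zero]) (by simp),
      smul_apply, smul_eq_mul]
  · simp [mul_apply, hE a ha]

theorem isPrimitiveRoot_exp_mul_exp {x y : ℝ} {p : ℤ} {k : ℕ} (hk : k ≠ 0)
    (hcop : p.gcd k = 1) (hsum : x + y = p / k) :
    IsPrimitiveRoot (exp (2 * π * I * x) * exp (2 * π * I * y)) k := by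
  rw [← Complex.exp_add, ← mul_add, ← ofReal_add, hsum]
  push_cast
  exact isPrimitiveRoot_exp_of_isCoprime p k hk (Int.isCoprime_iff_gcd_eq_one.2 hcop)

section DMrefl

variable {n i : ℕ} (μ : ℕ → ℝ)

theorem DMrefl_sub_one_apply_of_ne {a : Fin (n - 2)} (ha : a.val + 1 ≠ i) (b : Fin (n - 2)) :
    (DMrefl n μ i - 1) a b = 0 := by
  simp [DMrefl, ha, one_apply]

theorem DMrefl_sub_one_apply_self_of_eq {a : Fin (n - 2)} (ha : a.val + 1 = i) :
    (DMrefl n μ i - 1) a a = exp (2 * π * I * μ i) * exp (2 * π * I * μ (i + 1)) - 1 := by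
  simp [DMrefl, ha]

theorem orderOf_DMrefl (hi1 : 1 ≤ i) (hi2 : i ≤ n - 2)
    (hβ : exp (2 * π * I * μ i) * exp (2 * π * I * μ (i + 1)) ≠ 1) :
    orderOf (DMrefl n μ i) = orderOf (exp (2 * π * I * μ i) * exp (2 * π * I * μ (i + 1))) := by
  let r : Fin (n - 2) := ⟨i - 1, by omega⟩
  have hdiag := DMrefl_sub_one_apply_self_of_eq μ (a := r) (Nat.sub_add_cancel hi1)
  have hrows (a : Fin (n - 2)) (ha : a ≠ r) : ∀ b, (DMrefl n μ i - 1) a b = 0 :=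
    DMrefl_sub_one_apply_of_ne μ fun h => ha (Fin.ext (by simp only [r]; omega))
  have hsq := hdiag ▸ Matrix.mul_self_eq_smul_of_eq_zero_off_row r hrows
  have hne : DMrefl n μ i - 1 ≠ 0 := fun h =>
    sub_ne_zero.2 hβ (by rw [← hdiag, h, Matrix.zero_apply])
  simpa using orderOf_one_add_eq_orderOf hsq hne hβ

end DMrefl

theorem dmrefl_order_general (n : ℕ) (μ : ℕ → ℝ)
    (i : ℕ) (hi1 : 1 ≤ i) (hi2 : i ≤ n - 2)
    (p : ℤ) (k : ℕ) (hk : 2 ≤ k) (hcop : Int.gcd p (k : ℤ) = 1)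
    (hsum : μ i + μ (i + 1) = (p : ℝ) / (k : ℝ)) :
    DMrefl n μ i ^ k = 1 ∧ ∀ m : ℕ, 1 ≤ m → m < k → DMrefl n μ i ^ m ≠ 1 := by
  have hβ := isPrimitiveRoot_exp_mul_exp (by omega) hcop hsum
  have hR : orderOf (DMrefl n μ i) = k :=
    (orderOf_DMrefl μ hi1 hi2 (hβ.ne_one (by omega))).trans hβ.eq_orderOf.symm
  exact ⟨hR ▸ pow_orderOf_eq_one _,
    fun m hm hmk => pow_ne_one_of_lt_orderOf (by omega) (hR ▸ hmk)⟩

/-- If `μ_i + μ_{i+1} = p/k` is rational and not an integer, in lowest terms with `k ≥ 2`,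
then the braid matrix `R = R_{i,i+1}` has order exactly `k` in `GL_{n−2}(ℂ)`:
`R^k = Id` and `R^m ≠ Id` for `1 ≤ m < k`. -/
theorem dmrefl_order (n : ℕ) (hn : 3 ≤ n) (μ : ℕ → ℝ)
    (hμ : ∀ j, 1 ≤ j → j ≤ n → 0 < μ j ∧ μ j < 1)
    (i : ℕ) (hi1 : 1 ≤ i) (hi2 : i ≤ n - 2)
    (p : ℤ) (k : ℕ) (hk : 2 ≤ k) (hcop : Int.gcd p (k : ℤ) = 1)
    (hsum : μ i + μ (i + 1) = (p : ℝ) / (k : ℝ)) :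
    DMrefl n μ i ^ k = 1 ∧ ∀ m : ℕ, 1 ≤ m → m < k → DMrefl n μ i ^ m ≠ 1 :=
  dmrefl_order_general n μ i hi1 hi2 p k hk hcop hsum
end

section
/- Let a, b, d₁, d₂ be positive integers with a·d₁ = b·d₂, let g = gcd(a,b), and set ζ = exp(2πi/b). Let A, B be nonzero polynomials with complex coefficients. Then: (1) for every integer k, A^a + (ζ^k·B)^b = A^a + B^b; and (2) for integers k, k′, there exists λ ∈ ℂ with λ^{d₁}·A = A and λ^{d₂}·(ζ^k·B) = ζ^{k′}·B if and only if k ≡ k′ (mod g). Consequently, if g > 1, the g pairs (A, B), (A, ζ·B), …, (A, ζ^{g−1}·B) lie in g pairwise distinct orbits of the action λ·(A,B) = (λ^{d₁}·A, λ^{d₂}·B) of ℂ* yet all have the same value of A^a + B^b; in particular the pseudo-discriminant is at least g-to-one, and for it to be generically injective it is necessary that gcd(a,b) = 1. -/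
/-!
Write `N = a·d₁ = b·d₂` and `ζ = ω^{d₂}` for the primitive `N`-th root of unity
`ω = exp(2πi/N)`. Since `ζ^b = 1`, twisting `B` by a power of `ζ` does not change `A^a + B^b`.
As `A, B ≠ 0`, `λ` moves `(A, ζ^k B)` to `(A, ζ^{k'} B)` iff `λ^{d₁} = 1` and
`λ^{d₂} = ζ^{k'-k}`. The `d₁`-th roots of unity are the `λ = ω^{a j}`, and for these
`λ^{d₂} = ζ^{a j}`; so such a `λ` exists iff `k' - k ∈ aℤ + bℤ = gcd(a,b)ℤ`.
-/

open Complex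

theorem Nat.cast_gcd_dvd_iff_exists_eq_mul_add_mul (a b : ℕ) (m : ℤ) :
    (Nat.gcd a b : ℤ) ∣ m ↔ ∃ x y : ℤ, m = a * x + b * y := by
  rw [← Int.gcd_natCast_natCast, Int.coe_gcd, gcd_dvd_iff_exists]

section

variable {K : Type*} [Field K]

theorem exists_pow_eq_one_and_pow_eq_zpow_iff {a b d₁ d₂ : ℕ} {ω : K}
    (hω : IsPrimitiveRoot ω (b * d₂)) (hN₀ : b * d₂ ≠ 0) (hN : a * d₁ = b * d₂) (m : ℤ) :
    (∃ l : K, l ^ d₁ = 1 ∧ l ^ d₂ = (ω ^ d₂) ^ m) ↔ (Nat.gcd a b : ℤ) ∣ m := by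
  have hζ : IsPrimitiveRoot (ω ^ d₂) b := hω.pow (Nat.pos_of_ne_zero hN₀) (mul_comm _ _)
  have hη : IsPrimitiveRoot (ω ^ a) d₁ := hω.pow (Nat.pos_of_ne_zero hN₀) hN.symm
  have hd₁ : NeZero d₁ := ⟨right_ne_zero_of_mul (hN ▸ hN₀)⟩
  have hζ₀ : ω ^ d₂ ≠ 0 := pow_ne_zero _ (hω.ne_zero hN₀)
  have hpow (x : ℤ) : ((ω ^ a) ^ x) ^ d₂ = (ω ^ d₂) ^ ((a : ℤ) * x) := by
    simp only [← zpow_natCast, ← zpow_mul]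
    ring_nf
  rw [Nat.cast_gcd_dvd_iff_exists_eq_mul_add_mul]
  constructor
  · rintro ⟨l, hl₁, hl₂⟩
    obtain ⟨j, -, rfl⟩ := hη.eq_pow_of_pow_eq_one hl₁
    rw [← zpow_natCast (ω ^ a), hpow, ← div_eq_one_iff_eq (zpow_ne_zero _ hζ₀),
      ← zpow_sub₀ hζ₀, hζ.zpow_eq_one_iff_dvd] at hl₂
    obtain ⟨t, ht⟩ := hl₂
    exact ⟨j, -t, by linear_combination -ht⟩
  · rintro ⟨x, y, rfl⟩
    refine ⟨(ω ^ a) ^ x, ?_, ?_⟩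
    · rw [← zpow_natCast, zpow_comm, zpow_natCast, hη.pow_eq_one, one_zpow]
    · rw [hpow, zpow_add₀ hζ₀, (hζ.zpow_eq_one_iff_dvd _).2 (dvd_mul_right _ _), mul_one]

theorem weighted_smul_eq_iff {M : Type*} [AddCommGroup M] [Module K M]
    [NoZeroSMulDivisors K M] {A B : M} (hA : A ≠ 0) (hB : B ≠ 0) {ζ : K} (hζ : ζ ≠ 0)
    (d₁ d₂ : ℕ) (k k' : ℤ) (l : K) :
    (l ^ d₁ • A = A ∧ l ^ d₂ • ζ ^ k • B = ζ ^ k' • B) ↔ (l ^ d₁ = 1 ∧ l ^ d₂ = ζ ^ (k' - k)) := by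
  rw [← (smul_left_injective K hA).eq_iff, one_smul, smul_smul,
    (smul_left_injective K hB).eq_iff, zpow_sub₀ hζ, eq_div_iff (zpow_ne_zero _ hζ)]

end

theorem Complex.exp_two_pi_I_div_eq_pow {b d : ℕ} (hd : d ≠ 0) :
    exp (2 * Real.pi * I / b) = exp (2 * Real.pi * I / (b * d : ℕ)) ^ d := by
  rw [← Complex.exp_nat_mul, Nat.cast_mul, mul_div_assoc', mul_comm (d : ℂ),
    mul_div_mul_right _ _ (Nat.cast_ne_zero.mpr hd)]

theorem pseudoDiscriminant_gcd_to_one_general (a b d₁ d₂ : ℕ)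
    (hb : 0 < b) (hd₂ : 0 < d₂)
    (hN : a * d₁ = b * d₂) (g : ℕ) (hg : g = Nat.gcd a b)
    (ζ : ℂ) (hζ : ζ = Complex.exp (2 * Real.pi * Complex.I / (b : ℂ)))
    (A B : Polynomial ℂ) (hA : A ≠ 0) (hB : B ≠ 0) :
    (∀ k : ℤ, A ^ a + ((ζ ^ k) • B) ^ b = A ^ a + B ^ b) ∧
    (∀ k k' : ℤ,
      (∃ l : ℂ, (l ^ d₁) • A = A ∧ (l ^ d₂) • ((ζ ^ k) • B) = (ζ ^ k') • B) ↔
        (g : ℤ) ∣ (k - k')) ∧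
    (1 < g → ∀ k k' : ℕ, k < g → k' < g → k ≠ k' →
      ¬ ∃ l : ℂ, (l ^ d₁) • A = A ∧ (l ^ d₂) • ((ζ ^ k) • B) = (ζ ^ k') • B) := by
  have hN₀ : b * d₂ ≠ 0 := (Nat.mul_pos hb hd₂).ne'
  obtain ⟨ω, hω, rfl⟩ : ∃ ω : ℂ, IsPrimitiveRoot ω (b * d₂) ∧ ζ = ω ^ d₂ :=
    ⟨_, isPrimitiveRoot_exp _ hN₀, hζ.trans (exp_two_pi_I_div_eq_pow hd₂.ne')⟩
  subst hg
  have same_orbit_iff (k k' : ℤ) :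
      (∃ l : ℂ, l ^ d₁ • A = A ∧ l ^ d₂ • (ω ^ d₂) ^ k • B = (ω ^ d₂) ^ k' • B) ↔
        (Nat.gcd a b : ℤ) ∣ k - k' := by
    simp only [weighted_smul_eq_iff hA hB (pow_ne_zero _ (hω.ne_zero hN₀))]
    rw [dvd_sub_comm, exists_pow_eq_one_and_pow_eq_zpow_iff hω hN₀ hN]
  refine ⟨fun k => ?_, same_orbit_iff, fun _ k k' hk hk' hne ⟨l, hl⟩ => hne ?_⟩
  · have hζb : (ω ^ d₂) ^ b = 1 := (hω.pow (Nat.pos_of_ne_zero hN₀) (mul_comm _ _)).pow_eq_one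
    rw [smul_pow, ← zpow_natCast, zpow_comm, zpow_natCast, hζb, one_zpow, one_smul]
  · refine Nat.ModEq.eq_of_lt_of_lt (Nat.modEq_iff_dvd.2 ?_) hk hk'
    rw [dvd_sub_comm, ← same_orbit_iff]
    exact ⟨l, by exact_mod_cast hl⟩

/-- With `a·d₁ = b·d₂`, `g = gcd(a,b)`, `ζ = exp(2πi/b)`, and `A, B` nonzero complex
polynomials:
(1) replacing `B` by `ζ^k·B` does not change `A^a + B^b`;
(2) `(A, ζ^k·B)` and `(A, ζ^{k'}·B)` lie in the same orbit of the weighted ℂ*-action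
`λ·(A,B) = (λ^{d₁}A, λ^{d₂}B)` iff `k ≡ k' (mod g)`.
Consequently, if `g > 1`, the pairs `(A, ζ^k·B)` for `0 ≤ k < g` lie in `g` pairwise
distinct orbits yet all have the same pseudo-discriminant `A^a + B^b`; in particular the
pseudo-discriminant is at least `g`-to-one, and generic injectivity forces `gcd(a,b) = 1`. -/
theorem pseudoDiscriminant_gcd_to_one (a b d₁ d₂ : ℕ)
    (ha : 0 < a) (hb : 0 < b) (hd₁ : 0 < d₁) (hd₂ : 0 < d₂)
    (hN : a * d₁ = b * d₂) (g : ℕ) (hg : g = Nat.gcd a b)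
    (ζ : ℂ) (hζ : ζ = Complex.exp (2 * Real.pi * Complex.I / (b : ℂ)))
    (A B : Polynomial ℂ) (hA : A ≠ 0) (hB : B ≠ 0) :
    (∀ k : ℤ, A ^ a + ((ζ ^ k) • B) ^ b = A ^ a + B ^ b) ∧
    (∀ k k' : ℤ,
      (∃ l : ℂ, (l ^ d₁) • A = A ∧ (l ^ d₂) • ((ζ ^ k) • B) = (ζ ^ k') • B) ↔
        (g : ℤ) ∣ (k - k')) ∧
    (1 < g → ∀ k k' : ℕ, k < g → k' < g → k ≠ k' →
      ¬ ∃ l : ℂ, (l ^ d₁) • A = A ∧ (l ^ d₂) • ((ζ ^ k) • B) = (ζ ^ k') • B) :=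
  pseudoDiscriminant_gcd_to_one_general a b d₁ d₂ hb hd₂ hN g hg ζ hζ A B hA hB
end
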